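/- arXiv:0707.2760 — 4 statements merged into one kernel-verified Lean document; each statement's English description precedes it below -/
import Mathlib

section
/- Let T be a spanning tree of a finite connected graph G, and let c be the number of connected components of a spanning forest F of G whose edge set is contained in that of G. If F is a spanning forest of G with c components and ℓ leaves, then G has a spanning tree with at least ℓ − 2(c − 1) leaves. -/
/-- `T` is a spanning tree of `G`: a subgraph on all vertices that is a tree. -/
def IsSpanningTreeOf {V : Type*} (T G : SimpleGraph V) : Prop := T ≤ G ∧ T.IsTree

/-- The set of leaves (vertices of degree 1) of a graph. -/
def leafSet {V : Type*} (T : SimpleGraph V) : Set V := {v | (T.neighborSet v).ncard = 1}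

/-- The number of leaves of a graph. -/
noncomputable def numLeaves {V : Type*} (T : SimpleGraph V) : ℕ := (leafSet T).ncard

/-!
Adding to `F` an edge of `G` that joins two of its components keeps it a forest, lowers the
number of components by one, and changes the degree of only its two endpoints, so it destroys
at most two leaves. Repeating this `c - 1` times ends with a spanning tree of `G`.
-/

namespace SimpleGraph

variable {V : Type*} {G F : SimpleGraph V}

theorem Preconnected.exists_adj_not_reachable (hG : G.Preconnected) (hF : ¬F.Preconnected) :
    ∃ a b, G.Adj a b ∧ ¬F.Reachable a b := by
  obtain ⟨u, v, huv⟩ : ∃ u v, ¬F.Reachable u v := by simpa [Preconnected] using hF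
  obtain ⟨p⟩ := hG u v
  obtain ⟨d, -, hd, hd'⟩ := p.exists_boundary_dart {x | F.Reachable u x} (Reachable.refl u) huv
  exact ⟨d.fst, d.snd, d.adj, fun h => hd' (hd.trans h)⟩

theorem card_connectedComponent_sup_edge_lt [Finite V] {a b : V} (h : ¬F.Reachable a b) :
    Nat.card (F ⊔ edge a b).ConnectedComponent < Nat.card F.ConnectedComponent := by
  have hsurj := ConnectedComponent.surjective_map_ofLE (le_sup_left : F ≤ F ⊔ edge a b)
  refine lt_of_le_of_ne (Nat.card_le_card_of_surjective _ hsurj) fun heq => h ?_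
  have hinj := (hsurj.bijective_of_nat_card_le heq.ge).injective
  have hne : a ≠ b := by
    rintro rfl
    exact h .rfl
  have hab : (F ⊔ edge a b).Adj a b := by simp [edge_adj, hne]
  exact ConnectedComponent.eq.mp <| hinj <| ConnectedComponent.connectedComponentMk_eq_of_adj hab

theorem neighborSet_sup_edge_of_ne {a b v : V} (ha : v ≠ a) (hb : v ≠ b) :
    (F ⊔ edge a b).neighborSet v = F.neighborSet v := by
  ext w
  simp [edge_adj, ha, hb]

end SimpleGraph

open SimpleGraph

theorem leafSet_subset_leafSet_sup_edge_union {V : Type*} (F : SimpleGraph V) (a b : V) :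
    leafSet F ⊆ leafSet (F ⊔ edge a b) ∪ {a, b} := by
  intro v hv
  by_cases hvab : v = a ∨ v = b
  · exact Or.inr hvab
  push Not at hvab
  left
  simpa only [leafSet, Set.mem_ofPred_eq, neighborSet_sup_edge_of_ne hvab.1 hvab.2] using hv

theorem numLeaves_le_numLeaves_sup_edge_add_two {V : Type*} [Finite V] (F : SimpleGraph V)
    (a b : V) : numLeaves F ≤ numLeaves (F ⊔ edge a b) + 2 :=
  calc numLeaves F ≤ (leafSet (F ⊔ edge a b) ∪ {a, b}).ncard :=
        Set.ncard_le_ncard (leafSet_subset_leafSet_sup_edge_union F a b)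
    _ ≤ numLeaves (F ⊔ edge a b) + ({a, b} : Set V).ncard := Set.ncard_union_le _ _
    _ ≤ numLeaves (F ⊔ edge a b) + 2 := by grw [Set.ncard_insert_le, Set.ncard_singleton]

theorem exists_isSpanningTreeOf_numLeaves_le {V : Type*} [Finite V] {G F : SimpleGraph V}
    (hG : G.Connected) (hFG : F ≤ G) (hF : F.IsAcyclic) : ∃ T, IsSpanningTreeOf T G ∧
      numLeaves F ≤ numLeaves T + 2 * (Nat.card F.ConnectedComponent - 1) := by
  have := hG.nonempty
  induction hn : Nat.card F.ConnectedComponent using Nat.strong_induction_on generalizing F with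
  | _ n ih =>
  by_cases hFc : F.Preconnected
  · exact ⟨F, ⟨hFG, ⟨hFc⟩, hF⟩, Nat.le_add_right _ _⟩
  obtain ⟨a, b, hab, hnr⟩ := hG.preconnected.exists_adj_not_reachable hFc
  have hlt := card_connectedComponent_sup_edge_lt hnr
  have hF'G : F ⊔ edge a b ≤ G := sup_le hFG ((edge_le_iff G).mpr (Or.inr hab))
  obtain ⟨T, hT, hle⟩ := ih _ (hn ▸ hlt) hF'G (hF.sup_edge_of_not_reachable hnr) rfl
  have hleaves := numLeaves_le_numLeaves_sup_edge_add_two F a b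
  have hpos : 0 < Nat.card (F ⊔ edge a b).ConnectedComponent := Nat.card_pos
  exact ⟨T, hT, by omega⟩

/-- If `F` is a spanning forest of a finite connected graph `G` with `c` components and
`ℓ` leaves, then `G` has a spanning tree with at least `ℓ − 2(c − 1)` leaves. -/
theorem spanning_forest_to_tree {V : Type*} [Fintype V] (G F : SimpleGraph V)
    (hG : G.Connected) (hFG : F ≤ G) (hF : F.IsAcyclic) (c ℓ : ℕ)
    (hc : c = Nat.card F.ConnectedComponent) (hl : ℓ = numLeaves F) :
    ∃ T : SimpleGraph V, IsSpanningTreeOf T G ∧ ℓ ≤ numLeaves T + 2 * (c - 1) := by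
  subst hc hl
  exact exists_isSpanningTreeOf_numLeaves_le hG hFG hF
end

section
/- Let G be a graph containing a blossom subgraph B whose only terminals are c1 and c2. If T is a spanning tree of G with the maximum number of leaves, then at least one of c1, c2 is not a leaf of T. -/
/-- The blossom graph on 7 vertices: centre `b = 0` adjacent to `a1,a2,a3,a4 = 1,2,3,4`,
edges `a1a2`, `a3a4`, terminal `c1 = 5` adjacent to `a1,a2`, terminal `c2 = 6`
adjacent to `a3,a4`. -/
def blossomGraph : SimpleGraph (Fin 7) :=
  SimpleGraph.fromRel (fun i j =>
    (i, j) ∈ ([(0,1),(0,2),(0,3),(0,4),(1,2),(3,4),(5,1),(5,2),(6,3),(6,4)] :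
      List (Fin 7 × Fin 7)))

/-- If a connected graph `G` (with more vertices than the blossom) contains a blossom
subgraph whose only terminals are `c1` and `c2`, and `T` is a spanning tree of `G`
with the maximum number of leaves, then at least one of `c1, c2` is not a leaf of
`T`. -/
theorem blossom_terminal_not_leaf {V : Type*} [Fintype V] (G : SimpleGraph V)
    (hG : G.Connected) (hcard : 7 < Fintype.card V) (f : Fin 7 ↪ V)
    (hemb : ∀ i j, blossomGraph.Adj i j → G.Adj (f i) (f j))
    (hterm : ∀ i : Fin 7, i ≠ 5 → i ≠ 6 →
      G.neighborSet (f i) = f '' blossomGraph.neighborSet i)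
    (T : SimpleGraph V) (hT : IsSpanningTreeOf T G)
    (hmax : ∀ T' : SimpleGraph V, IsSpanningTreeOf T' G → numLeaves T' ≤ numLeaves T) :
    f 5 ∉ leafSet T ∨ f 6 ∉ leafSet T := by
  by_contra h
  push_neg at h
  obtain ⟨h5, h6⟩ := h
  -- the image of the interior of the blossom
  set I : Set V := f '' {0, 1, 2, 3, 4} with hI
  -- the interior together with those terminals whose unique tree-neighbour is interior
  set C : Set V := I ∪ ((f '' {(5 : Fin 7), 6}) ∩ {x | ∀ y, T.Adj x y → y ∈ I})
    with hCdef
  -- if a leaf terminal is tree-adjacent to an interior vertex, all its tree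
  -- neighbours are interior
  have leafStep : ∀ j : Fin 7, f j ∈ leafSet T → ∀ v ∈ I, T.Adj v (f j) →
      ∀ y, T.Adj (f j) y → y ∈ I := by
    intro j hj v hv hadj y hy
    obtain ⟨u, hu⟩ := Set.ncard_eq_one.mp hj
    have hvu : v = u := by
      have : v ∈ T.neighborSet (f j) := hadj.symm
      rwa [hu, Set.mem_singleton_iff] at this
    have hyu : y ∈ T.neighborSet (f j) := hy
    rw [hu, Set.mem_singleton_iff] at hyu
    rw [hyu, ← hvu]
    exact hv
  -- C is closed under tree adjacency
  have hclosed : ∀ v ∈ C, ∀ y, T.Adj v y → y ∈ C := by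
    intro v hv y hadj
    rcases hv with hv | ⟨_, hv2⟩
    · obtain ⟨i, hi, rfl⟩ := hv
      have hi56 : i ≠ 5 ∧ i ≠ 6 := by
        clear hadj
        simp only [Set.mem_insert_iff, Set.mem_singleton_iff] at hi
        rcases hi with rfl | rfl | rfl | rfl | rfl <;> exact ⟨by decide, by decide⟩
      have hyG : y ∈ G.neighborSet (f i) := hT.1 hadj
      rw [hterm i hi56.1 hi56.2] at hyG
      obtain ⟨j, -, rfl⟩ := hyG
      by_cases hj : j = 5 ∨ j = 6
      · right
        have hleaf : f j ∈ leafSet T := by rcases hj with rfl | rfl; exacts [h5, h6]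
        refine ⟨⟨j, by rcases hj with rfl | rfl <;> simp, rfl⟩, ?_⟩
        exact leafStep j hleaf (f i) ⟨i, hi, rfl⟩ hadj
      · left
        push_neg at hj
        refine ⟨j, ?_, rfl⟩
        simp only [Set.mem_insert_iff, Set.mem_singleton_iff]
        omega
    · left
      exact hv2 y hadj
  -- there is a vertex outside the range of f
  have hex : ∃ w : V, ∀ j : Fin 7, f j ≠ w := by
    by_contra hc
    push_neg at hc
    have hsurj : Function.Surjective f := fun w => hc w
    have := Fintype.card_le_of_surjective f hsurj
    simp only [Fintype.card_fin] at this
    omega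
  obtain ⟨w, hw⟩ := hex
  -- T is connected, take a walk from f 0 to w
  have hreach : T.Reachable (f 0) w := hT.2.isConnected.preconnected (f 0) w
  obtain ⟨p⟩ := hreach
  -- walks starting in C stay in C
  have key : ∀ {a b : V} (_ : T.Walk a b), a ∈ C → b ∈ C := by
    intro a b p
    induction p with
    | nil => exact id
    | cons h q ih => intro ha; exact ih (hclosed _ ha _ h)
  have hwC : w ∈ C := key p (Or.inl ⟨0, by simp, rfl⟩)
  rcases hwC with ⟨j, -, hj⟩ | ⟨⟨j, -, hj⟩, -⟩ <;> exact hw j hj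
end

section
/- Let G be a graph containing a blossom subgraph B whose only terminals are c1 and c2, and let T be a spanning tree of G. If the edge set E(T) ∩ E(B) induces a tree (spanning all of B), then at most three of the five non-terminal vertices of B are leaves of T. -/
/-- The graph on the blossom's vertices whose edges are the blossom edges used by `T`
(i.e. the edge set `E(T) ∩ E(B)`). -/
def blossomInter {V : Type*} (T : SimpleGraph V) (f : Fin 7 ↪ V) : SimpleGraph (Fin 7) where
  Adj i j := blossomGraph.Adj i j ∧ T.Adj (f i) (f j)
  symm := ⟨fun i j h => ⟨blossomGraph.adj_symm h.1, T.adj_symm h.2⟩⟩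
  loopless := ⟨fun i h => blossomGraph.irrefl h.1⟩

/-!
The blossom edges used by `T` form a connected spanning subgraph `H` of `B`, and a non-terminal
vertex of `B` is a leaf of `T` exactly when it is a leaf of `H`, because all its `T`-neighbours
lie in `B`. Since `c1` and `c2` are neither adjacent nor have a common neighbour in `B`, the path
from `c1` to `c2` in `H` has length at least three, so its first two internal vertices are two
non-terminals with two neighbours each. Hence at most `5 - 2 = 3` non-terminals are leaves.
-/

namespace SimpleGraph

variable {V : Type*} {G : SimpleGraph V}

theorem Walk.three_le_length {u w : V} (huw : u ≠ w) (hadj : ¬G.Adj u w)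
    (hcommon : G.commonNeighbors u w = ∅) : ∀ p : G.Walk u w, 3 ≤ p.length
  | .nil => absurd rfl huw
  | .cons h .nil => absurd h hadj
  | .cons h (.cons h' .nil) => by
    simpa [hcommon] using (G.mem_commonNeighbors.2 ⟨h, h'.symm⟩ : _ ∈ G.commonNeighbors u w)
  | .cons _ (.cons _ (.cons _ _)) => by simp only [Walk.length_cons]; omega

theorem Walk.IsPath.getVert_ne_getVert {u w : V} {p : G.Walk u w} (hp : p.IsPath) {i j : ℕ}
    (hi : i ≤ p.length) (hj : j ≤ p.length) (hij : i ≠ j) : p.getVert i ≠ p.getVert j :=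
  fun h => hij (hp.getVert_injOn hi hj h)

theorem Walk.IsPath.neighborSet_getVert_nontrivial {u w : V} {p : G.Walk u w} (hp : p.IsPath)
    {i : ℕ} (hi0 : 0 < i) (hi : i < p.length) : (G.neighborSet (p.getVert i)).Nontrivial := by
  obtain ⟨j, rfl⟩ : ∃ j, i = j + 1 := ⟨i - 1, by omega⟩
  exact ⟨p.getVert j, (p.adj_getVert_succ (by omega)).symm, p.getVert (j + 2),
    p.adj_getVert_succ hi, hp.getVert_ne_getVert (by omega) (by omega) (by omega)⟩

theorem Connected.ncard_leaves_add_four_le [Finite V] (hG : G.Connected) {u w : V}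
    (huw : u ≠ w) (hadj : ¬G.Adj u w) (hcommon : G.commonNeighbors u w = ∅) :
    {v | v ≠ u ∧ v ≠ w ∧ (G.neighborSet v).ncard = 1}.ncard + 4 ≤ Nat.card V := by
  obtain ⟨p, hp⟩ := hG.exists_isPath u w
  have hlen := Walk.three_le_length huw hadj hcommon p
  have hxu := hp.getVert_ne_getVert (i := 1) (j := 0) (by omega) (by omega) (by omega)
  have hxw := hp.getVert_ne_getVert (i := 1) (j := p.length) (by omega) le_rfl (by omega)
  have hyu := hp.getVert_ne_getVert (i := 2) (j := 0) (by omega) (by omega) (by omega)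
  have hyw := hp.getVert_ne_getVert (i := 2) (j := p.length) (by omega) le_rfl (by omega)
  have hxy := hp.getVert_ne_getVert (i := 1) (j := 2) (by omega) (by omega) (by omega)
  simp only [Walk.getVert_zero, Walk.getVert_length] at hxu hxw hyu hyw
  have hsub : {v | v ≠ u ∧ v ≠ w ∧ (G.neighborSet v).ncard = 1} ⊆
      ({u, w, p.getVert 1, p.getVert 2} : Set V)ᶜ := by
    rintro v ⟨hvu, hvw, hleaf⟩ hv
    obtain ⟨a, ha⟩ := Set.ncard_eq_one.1 hleaf
    have hinternal : ∀ i, 0 < i → i < p.length → v ≠ p.getVert i := by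
      rintro i hi0 hi rfl
      exact (hp.neighborSet_getVert_nontrivial hi0 hi).not_subsingleton
        (ha ▸ Set.subsingleton_singleton)
    rcases hv with rfl | rfl | rfl | rfl
    exacts [hvu rfl, hvw rfl, hinternal 1 (by omega) (by omega) rfl,
      hinternal 2 (by omega) (by omega) rfl]
  have hfour : ({u, w, p.getVert 1, p.getVert 2} : Set V).ncard = 4 := by
    rw [Set.ncard_insert_of_notMem, Set.ncard_insert_of_notMem, Set.ncard_pair hxy]
    · simp [hxw.symm, hyw.symm]
    · simp [huw, hxu.symm, hyu.symm]
  calc _ ≤ ({u, w, p.getVert 1, p.getVert 2} : Set V)ᶜ.ncard + 4 :=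
        Nat.add_le_add_right (Set.ncard_le_ncard hsub) 4
    _ = Nat.card V := by rw [← hfour, add_comm, Set.ncard_add_ncard_compl]

end SimpleGraph

open SimpleGraph

instance : DecidableRel blossomGraph.Adj := fun v w =>
  decidable_of_iff _ (fromRel_adj _ v w).symm

theorem blossomGraph_commonNeighbors_five_six : blossomGraph.commonNeighbors 5 6 = ∅ := by
  ext v
  simp only [mem_commonNeighbors, Set.mem_empty_iff_false, iff_false]
  revert v
  decide

theorem ncard_leaves_le_three_of_le_blossomGraph {H : SimpleGraph (Fin 7)}
    (hle : H ≤ blossomGraph) (hH : H.Connected) :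
    {i : Fin 7 | i ≠ 5 ∧ i ≠ 6 ∧ (H.neighborSet i).ncard = 1}.ncard ≤ 3 := by
  have hcommon : H.commonNeighbors 5 6 = ∅ := Set.subset_empty_iff.1 fun v hv =>
    blossomGraph_commonNeighbors_five_six ▸ ⟨hle hv.1, hle hv.2⟩
  have := hH.ncard_leaves_add_four_le (by decide) (fun h => absurd (hle h) (by decide)) hcommon
  simpa using this

theorem blossomInter_le {V : Type*} (T : SimpleGraph V) (f : Fin 7 ↪ V) :
    blossomInter T f ≤ blossomGraph := fun _ _ h => h.1

theorem neighborSet_eq_image_blossomInter {V : Type*} {G T : SimpleGraph V} {f : Fin 7 ↪ V}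
    (hTG : T ≤ G) {i : Fin 7} (hi : G.neighborSet (f i) = f '' blossomGraph.neighborSet i) :
    T.neighborSet (f i) = f '' (blossomInter T f).neighborSet i := by
  ext v
  refine ⟨fun hv => ?_, ?_⟩
  · obtain ⟨j, hj, rfl⟩ : v ∈ f '' blossomGraph.neighborSet i := hi ▸ hTG hv
    exact ⟨j, ⟨hj, hv⟩, rfl⟩
  · rintro ⟨j, hj, rfl⟩
    exact hj.2

theorem blossom_tree_form_leaves_general {V : Type*} (G : SimpleGraph V)
    (f : Fin 7 ↪ V)
    (hterm : ∀ i : Fin 7, i ≠ 5 → i ≠ 6 →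
      G.neighborSet (f i) = f '' blossomGraph.neighborSet i)
    (T : SimpleGraph V) (hT : IsSpanningTreeOf T G)
    (htree : (blossomInter T f).IsTree) :
    {i : Fin 7 | i ≠ 5 ∧ i ≠ 6 ∧ f i ∈ leafSet T}.ncard ≤ 3 := by
  refine le_trans (Set.ncard_le_ncard ?_ (Set.toFinite _))
    (ncard_leaves_le_three_of_le_blossomGraph (blossomInter_le T f) htree.connected)
  rintro i ⟨h5, h6, hleaf⟩
  refine ⟨h5, h6, ?_⟩
  rwa [leafSet, Set.mem_ofPred_eq, neighborSet_eq_image_blossomInter hT.1 (hterm i h5 h6),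
    Set.ncard_image_of_injective _ f.injective] at hleaf

/-- If `G` contains a blossom subgraph `B` whose only terminals are `c1, c2`, `T` is a
spanning tree of `G`, and `E(T) ∩ E(B)` induces a tree spanning all of `B`, then at
most three of the five non-terminal vertices of `B` are leaves of `T`. -/
theorem blossom_tree_form_leaves {V : Type*} [Fintype V] (G : SimpleGraph V)
    (f : Fin 7 ↪ V)
    (hemb : ∀ i j, blossomGraph.Adj i j → G.Adj (f i) (f j))
    (hterm : ∀ i : Fin 7, i ≠ 5 → i ≠ 6 →
      G.neighborSet (f i) = f '' blossomGraph.neighborSet i)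
    (T : SimpleGraph V) (hT : IsSpanningTreeOf T G)
    (htree : (blossomInter T f).IsTree) :
    {i : Fin 7 | i ≠ 5 ∧ i ≠ 6 ∧ f i ∈ leafSet T}.ncard ≤ 3 :=
  blossom_tree_form_leaves_general G f hterm T hT htree
end

section
/- Let S be a finite connected multigraph with edge costs c : E(S) → {0, 1, 2}, and let L ⊆ V(S) be such that S − L is connected and nonempty and every vertex of L has a neighbor outside L. Among all spanning trees T of S with L ⊆ leaves(T), one maximizing the total cost Σ_{e ∉ E(T)} c(e) of non-tree edges can be obtained by taking a minimum-cost spanning tree T' of S − L (with respect to c) and attaching each vertex u ∈ L to T' by an edge of minimum cost among the edges joining u to V(S) \ L. -/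
open Set

namespace SimpleGraph

variable {V : Type*} {G H : SimpleGraph V} {s L : Set V} {p : V → V}

lemma spanningCoe_induce_adj {a b : V} :
    (G.induce s).spanningCoe.Adj a b ↔ G.Adj a b ∧ a ∈ s ∧ b ∈ s := by
  simp only [map_adj, comap_adj, Function.Embedding.coe_subtype]
  constructor
  · rintro ⟨a', b', h, rfl, rfl⟩
    exact ⟨h, a'.2, b'.2⟩
  · rintro ⟨h, ha, hb⟩
    exact ⟨⟨a, ha⟩, ⟨b, hb⟩, h, rfl, rfl⟩

lemma Walk.IsCycle.not_mem_support_of_subsingleton_neighborSet {u x : V} {p : G.Walk u u}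
    (hp : p.IsCycle) (hx : (G.neighborSet x).Subsingleton) : x ∉ p.support := by
  intro hxp
  obtain ⟨a, b, hab, hnbr⟩ := Set.ncard_eq_two.mp (hp.ncard_neighborSet_toSubgraph_eq_two hxp)
  have hsub := p.toSubgraph.neighborSet_subset x
  exact hab (hx (hsub (by simp [hnbr])) (hsub (by simp [hnbr])))

lemma IsAcyclic.of_induce (hs : (G.induce s).IsAcyclic)
    (hleaf : ∀ v ∉ s, (G.neighborSet v).Subsingleton) : G.IsAcyclic := by
  intro u c hc
  have hsupp : ∀ v ∈ c.support, v ∈ s := fun v hv ↦ by_contra fun hvs ↦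
    hc.not_mem_support_of_subsingleton_neighborSet (hleaf v hvs) hv
  refine hs (c.induce s hsupp) ?_
  rwa [← Walk.isCycle_map_iff_of_injective (f := (Embedding.induce s).toHom)
    Subtype.val_injective, Walk.map_induce]

lemma Connected.of_induce (hs : (G.induce s).Connected)
    (hattach : ∀ v ∉ s, ∃ w ∈ s, G.Adj v w) : G.Connected := by
  have reach_mem : ∀ v, ∃ w ∈ s, G.Reachable v w := fun v ↦ by
    by_cases hv : v ∈ s
    · exact ⟨v, hv, .rfl⟩
    · obtain ⟨w, hw, hvw⟩ := hattach v hv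
      exact ⟨w, hw, hvw.reachable⟩
  obtain ⟨⟨x, -⟩⟩ := hs.nonempty
  have : Nonempty V := ⟨x⟩
  refine ⟨fun a b ↦ ?_⟩
  obtain ⟨a', ha', haa'⟩ := reach_mem a
  obtain ⟨b', hb', hbb'⟩ := reach_mem b
  have := (hs.preconnected ⟨a', ha'⟩ ⟨b', hb'⟩).map (Embedding.induce s).toHom
  exact haa'.trans (this.trans hbb'.symm)

lemma Preconnected.exists_adj_mem (hG : G.Preconnected)
    (hleaf : ∀ v ∉ s, (G.neighborSet v).Subsingleton) {v x : V} (hv : v ∉ s) (hx : x ∈ s) :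
    ∃ w ∈ s, G.Adj v w := by
  obtain ⟨p, hp⟩ := hG.exists_isPath v x
  have hnil : ¬ p.Nil := Walk.not_nil_of_ne fun h ↦ hv (h ▸ hx)
  refine ⟨p.snd, by_contra fun hsnd ↦ ?_, p.adj_snd hnil⟩
  exact hp.isTrail.not_mem_support_of_subsingleton_neighborSet (p.adj_snd hnil).ne.symm
    (ne_of_mem_of_not_mem hx hsnd).symm (hleaf _ hsnd)
    (List.mem_of_mem_tail (p.snd_mem_tail_support hnil))

lemma IsTree.induce_of_subsingleton_neighborSet (hG : G.IsTree)
    (hleaf : ∀ v ∉ s, (G.neighborSet v).Subsingleton) (hs : s.Nonempty) :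
    (G.induce s).IsTree :=
  have : Nonempty s := hs.to_subtype
  ⟨⟨hG.connected.preconnected.induce_of_degree_eq_one hleaf⟩, hG.isAcyclic.induce s⟩

lemma isTree_of_induce (hs : (G.induce s).IsTree) (hattach : ∀ v ∉ s, ∃ w ∈ s, G.Adj v w)
    (hleaf : ∀ v ∉ s, (G.neighborSet v).Subsingleton) : G.IsTree :=
  ⟨hs.connected.of_induce hattach, hs.isAcyclic.of_induce hleaf⟩

lemma isTree_iff_induce_compl (hpend : ∀ u ∈ L, p u ∉ L ∧ G.neighborSet u = {p u})
    (hne : Lᶜ.Nonempty) : G.IsTree ↔ (G.induce Lᶜ).IsTree := by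
  have hleaf : ∀ u ∉ Lᶜ, (G.neighborSet u).Subsingleton := fun u hu ↦ by
    rw [(hpend u (not_not.mp hu)).2]
    exact subsingleton_singleton
  refine ⟨fun hG ↦ hG.induce_of_subsingleton_neighborSet hleaf hne,
    fun hs ↦ isTree_of_induce hs (fun u hu ↦ ?_) hleaf⟩
  have hpu := hpend u (not_not.mp hu)
  exact ⟨p u, hpu.1, by simp [← mem_neighborSet, hpu.2]⟩

lemma Preconnected.exists_pendant (hG : G.Preconnected)
    (hleaf : ∀ u ∈ L, (G.neighborSet u).ncard = 1) (hne : Lᶜ.Nonempty) :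
    ∃ p : V → V, ∀ u ∈ L, p u ∉ L ∧ G.neighborSet u = {p u} := by
  have hsub : ∀ u ∉ Lᶜ, (G.neighborSet u).Subsingleton := fun u hu ↦ by
    obtain ⟨w, hw⟩ := ncard_eq_one.mp (hleaf u (not_not.mp hu))
    exact hw ▸ subsingleton_singleton
  have hex : ∀ u ∈ L, ∃ w ∉ L, G.neighborSet u = {w} := fun u hu ↦ by
    obtain ⟨w, hwL, huw⟩ := hG.exists_adj_mem hsub (not_not.mpr hu) hne.some_mem
    obtain ⟨a, ha⟩ := ncard_eq_one.mp (hleaf u hu)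
    have hwa : w = a := by simpa [ha] using (show w ∈ G.neighborSet u from huw)
    exact ⟨w, hwL, hwa ▸ ha⟩
  choose! p hp using hex
  exact ⟨p, hp⟩

lemma edgeSet_eq_union_image (hpend : ∀ u ∈ L, p u ∉ L ∧ G.neighborSet u = {p u}) :
    G.edgeSet = (G.induce Lᶜ).spanningCoe.edgeSet ∪ (fun u ↦ s(u, p u)) '' L := by
  have hadj : ∀ u ∈ L, ∀ w, G.Adj u w ↔ w = p u := fun u hu w ↦ by
    rw [← mem_neighborSet, (hpend u hu).2, mem_singleton_iff]
  refine Subset.antisymm (fun e he ↦ ?_) (union_subset (edgeSet_mono (spanningCoe_induce_le _ _))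
    (image_subset_iff.mpr fun u hu ↦ (hadj u hu _).mpr rfl))
  induction e using Sym2.ind with | _ a b => ?_
  by_cases ha : a ∈ L
  · exact Or.inr ⟨a, ha, by rw [(hadj a ha b).mp he]⟩
  by_cases hb : b ∈ L
  · exact Or.inr ⟨b, hb, by rw [(hadj b hb a).mp (G.adj_symm he), Sym2.eq_swap]⟩
  exact Or.inl (spanningCoe_induce_adj.mpr ⟨he, ha, hb⟩)

lemma finsum_edgeSet_eq_add [Finite V] {M : Type*} [AddCommMonoid M] (c : Sym2 V → M)
    (hpend : ∀ u ∈ L, p u ∉ L ∧ G.neighborSet u = {p u}) :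
    ∑ᶠ e ∈ G.edgeSet, c e =
      ∑ᶠ e ∈ (G.induce Lᶜ).spanningCoe.edgeSet, c e + ∑ᶠ u ∈ L, c s(u, p u) := by
  have hdisj : Disjoint (G.induce Lᶜ).spanningCoe.edgeSet ((fun u ↦ s(u, p u)) '' L) := by
    rw [Set.disjoint_left]
    rintro e he ⟨u, hu, rfl⟩
    exact (spanningCoe_induce_adj.mp he).2.1 hu
  have hinj : InjOn (fun u ↦ s(u, p u)) L := fun u hu v hv huv ↦ by
    rcases Sym2.eq_iff.mp huv with ⟨h, -⟩ | ⟨h, -⟩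
    · exact h
    · exact absurd (h ▸ hu) (hpend v hv).1
  rw [edgeSet_eq_union_image hpend, finsum_mem_union hdisj (toFinite _) (toFinite _),
    finsum_mem_image hinj]

def attachLeaves (H : SimpleGraph V) (L : Set V) (p : V → V) : SimpleGraph V :=
  H ⊔ fromRel fun a b ↦ a ∈ L ∧ b = p a

lemma attachLeaves_le (hHG : H ≤ G) (hpG : ∀ u ∈ L, G.Adj u (p u)) :
    H.attachLeaves L p ≤ G := by
  refine sup_le hHG fun a b hab ↦ ?_
  rcases ((fromRel_adj _ a b).mp hab).2 with ⟨ha, rfl⟩ | ⟨hb, rfl⟩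
  · exact hpG a ha
  · exact (hpG b hb).symm

lemma neighborSet_attachLeaves (hH : ∀ a b, H.Adj a b → a ∉ L ∧ b ∉ L)
    (hp : ∀ u ∈ L, p u ∉ L) {u : V} (hu : u ∈ L) :
    (H.attachLeaves L p).neighborSet u = {p u} := by
  ext w
  simp only [attachLeaves, mem_neighborSet, sup_adj, fromRel_adj, mem_singleton_iff]
  constructor
  · rintro (h | ⟨-, ⟨-, rfl⟩ | ⟨hw, rfl⟩⟩)
    · exact absurd hu (hH u w h).1
    · rfl
    · exact absurd hu (hp w hw)
  · rintro rfl
    exact Or.inr ⟨ne_of_mem_of_not_mem hu (hp u hu), Or.inl ⟨hu, rfl⟩⟩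

lemma spanningCoe_induce_attachLeaves (hH : ∀ a b, H.Adj a b → a ∉ L ∧ b ∉ L) :
    ((H.attachLeaves L p).induce Lᶜ).spanningCoe = H := by
  ext a b
  simp only [spanningCoe_induce_adj, attachLeaves, sup_adj, fromRel_adj, mem_compl_iff]
  constructor
  · rintro ⟨h | ⟨-, ⟨ha', -⟩ | ⟨hb', -⟩⟩, ha, hb⟩
    · exact h
    · exact absurd ha' ha
    · exact absurd hb' hb
  · intro h
    exact ⟨Or.inl h, hH a b h⟩

end SimpleGraph

section FinsumOrder

variable {α M : Type*} [AddCommMonoid M] {f g : α → M} {s t u : Set α}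

lemma finsum_mem_le_finsum_mem [PartialOrder M] [IsOrderedAddMonoid M] (hs : s.Finite)
    (h : ∀ i ∈ s, f i ≤ g i) : ∑ᶠ i ∈ s, f i ≤ ∑ᶠ i ∈ s, g i := by
  rw [finsum_mem_eq_finite_toFinset_sum _ hs, finsum_mem_eq_finite_toFinset_sum _ hs]
  exact Finset.sum_le_sum fun i hi ↦ h i (hs.mem_toFinset.mp hi)

lemma finsum_mem_sdiff_le_finsum_mem_sdiff [LinearOrder M] [IsOrderedCancelAddMonoid M]
    (hs : s.Finite) (ht : t ⊆ s) (hu : u ⊆ s) (h : ∑ᶠ i ∈ t, f i ≤ ∑ᶠ i ∈ u, f i) :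
    ∑ᶠ i ∈ s \ u, f i ≤ ∑ᶠ i ∈ s \ t, f i := by
  by_contra! hlt
  have := add_lt_add_of_le_of_lt h hlt
  rw [finsum_mem_add_sdiff ht hs, finsum_mem_add_sdiff hu hs] at this
  exact lt_irrefl _ this

end FinsumOrder

open SimpleGraph

theorem min_tree_attach_optimal_general {V : Type*} [Fintype V] (S : SimpleGraph V)
    (c : Sym2 V → ℕ) (L : Set V)
    (T' : SimpleGraph V) (hT'S : T' ≤ S)
    (hT'supp : ∀ a b, T'.Adj a b → a ∉ L ∧ b ∉ L)
    (hT'tree : (T'.induce Lᶜ).IsTree)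
    (hT'min : ∀ F : SimpleGraph V, F ≤ S → (∀ a b, F.Adj a b → a ∉ L ∧ b ∉ L) →
      (F.induce Lᶜ).IsTree →
      (∑ᶠ e ∈ T'.edgeSet, c e) ≤ (∑ᶠ e ∈ F.edgeSet, c e))
    (g : V → V)
    (hg : ∀ u ∈ L, g u ∉ L ∧ S.Adj u (g u) ∧
      ∀ w ∉ L, S.Adj u w → c s(u, g u) ≤ c s(u, w))
    (T : SimpleGraph V)
    (hTdef : T = T' ⊔ SimpleGraph.fromRel (fun a b => a ∈ L ∧ b = g a)) :
    IsSpanningTreeOf T S ∧ (∀ u ∈ L, u ∈ leafSet T) ∧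
    ∀ T₂ : SimpleGraph V, IsSpanningTreeOf T₂ S → (∀ u ∈ L, u ∈ leafSet T₂) →
      (∑ᶠ e ∈ (S.edgeSet \ T₂.edgeSet), c e) ≤ (∑ᶠ e ∈ (S.edgeSet \ T.edgeSet), c e) := by
  change T = T'.attachLeaves L g at hTdef
  subst hTdef
  have hne : Lᶜ.Nonempty := nonempty_coe_sort.mp hT'tree.connected.nonempty
  have hpend : ∀ u ∈ L, g u ∉ L ∧ (T'.attachLeaves L g).neighborSet u = {g u} := fun u hu ↦
    ⟨(hg u hu).1, neighborSet_attachLeaves hT'supp (fun u hu ↦ (hg u hu).1) hu⟩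
  have hrestrict := spanningCoe_induce_attachLeaves (p := g) hT'supp
  have htree : (T'.attachLeaves L g).IsTree := by
    rwa [isTree_iff_induce_compl hpend hne, ← induce_spanningCoe (G := induce Lᶜ _), hrestrict]
  have hTS : T'.attachLeaves L g ≤ S := attachLeaves_le hT'S fun u hu ↦ (hg u hu).2.1
  refine ⟨⟨hTS, htree⟩,
    fun u hu ↦ by simp [leafSet, (hpend u hu).2], fun T₂ ⟨hT₂S, hT₂⟩ hleaf ↦ ?_⟩
  obtain ⟨f, hf⟩ := hT₂.connected.preconnected.exists_pendant hleaf hne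
  have hT'le := hT'min _ ((spanningCoe_induce_le _ _).trans hT₂S)
    (fun a b h ↦ (spanningCoe_induce_adj.mp h).2)
    (by rw [induce_spanningCoe]; exact (isTree_iff_induce_compl hf hne).mp hT₂)
  have hattach : ∑ᶠ u ∈ L, c s(u, g u) ≤ ∑ᶠ u ∈ L, c s(u, f u) :=
    finsum_mem_le_finsum_mem (toFinite L) fun u hu ↦
      (hg u hu).2.2 _ (hf u hu).1 (hT₂S (by simp [← mem_neighborSet, (hf u hu).2]))
  refine finsum_mem_sdiff_le_finsum_mem_sdiff (toFinite _) (edgeSet_mono hTS)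
    (edgeSet_mono hT₂S) ?_
  rw [finsum_edgeSet_eq_add c hpend, hrestrict, finsum_edgeSet_eq_add c hf]
  exact add_le_add hT'le hattach

/-- Let `S` be a finite connected graph with edge costs `c` taking values in `{0, 1, 2}`,
and let `L` be a set of vertices such that `S − L` is connected (and nonempty) and every
vertex of `L` has a neighbour outside `L`.  Take a minimum-cost spanning tree `T'` of
`S − L` and attach every vertex `u ∈ L` to it by an edge `u – g u` of minimum cost among
the edges joining `u` to `V(S) \ L`.  Then the resulting graph `T` is a spanning tree of
`S` with `L ⊆ leaves(T)` that, among all such spanning trees, maximizes the total cost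
`Σ_{e ∉ E(T)} c(e)` of non-tree edges. -/
theorem min_tree_attach_optimal {V : Type*} [Fintype V] (S : SimpleGraph V)
    (hS : S.Connected) (c : Sym2 V → ℕ) (hc : ∀ e, c e ≤ 2) (L : Set V)
    (hLconn : (S.induce Lᶜ).Connected)
    (hdom : ∀ u ∈ L, ∃ w ∉ L, S.Adj u w)
    (T' : SimpleGraph V) (hT'S : T' ≤ S)
    (hT'supp : ∀ a b, T'.Adj a b → a ∉ L ∧ b ∉ L)
    (hT'tree : (T'.induce Lᶜ).IsTree)
    (hT'min : ∀ F : SimpleGraph V, F ≤ S → (∀ a b, F.Adj a b → a ∉ L ∧ b ∉ L) →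
      (F.induce Lᶜ).IsTree →
      (∑ᶠ e ∈ T'.edgeSet, c e) ≤ (∑ᶠ e ∈ F.edgeSet, c e))
    (g : V → V)
    (hg : ∀ u ∈ L, g u ∉ L ∧ S.Adj u (g u) ∧
      ∀ w ∉ L, S.Adj u w → c s(u, g u) ≤ c s(u, w))
    (T : SimpleGraph V)
    (hTdef : T = T' ⊔ SimpleGraph.fromRel (fun a b => a ∈ L ∧ b = g a)) :
    IsSpanningTreeOf T S ∧ (∀ u ∈ L, u ∈ leafSet T) ∧
    ∀ T₂ : SimpleGraph V, IsSpanningTreeOf T₂ S → (∀ u ∈ L, u ∈ leafSet T₂) →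
      (∑ᶠ e ∈ (S.edgeSet \ T₂.edgeSet), c e) ≤ (∑ᶠ e ∈ (S.edgeSet \ T.edgeSet), c e) :=
  min_tree_attach_optimal_general S c L T' hT'S hT'supp hT'tree hT'min g hg T hTdef
end
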